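/- For compact open subgroups X and Y of G and elements g, h ∈ G, one has 1_{gY} ⋆ 1_{XhX} = (μ(Y ∩ X)/μ(X ∩ hXh⁻¹))·(1_{gYX} ⋆ 1_{hX}), where YX and XhX denote set products in G. -/

import Mathlib

open MeasureTheory
open scoped Pointwise

/-- The convolution `(f ⋆ f')(x) = ∫_G f(g)·f'(g⁻¹x) dμ(g)` of two real-valued functions
on `G` with respect to the measure `μ`. -/
noncomputable def mconv {G : Type} [Group G] [MeasurableSpace G]
    (μ : Measure G) (f f' : G → ℝ) : G → ℝ :=
  fun x => ∫ g, f g * f' (g⁻¹ * x) ∂μ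

/-! At `x`, with `Z = hXh⁻¹` and `b = xh⁻¹`, the two convolutions are `μ(gY ∩ bZX)` and
`μ(gYX ∩ bZ)`. For subgroups `U, W` the measure `μ(tU ∩ bW)` is `μ(U ∩ W)` if `t ∈ bWU`
and `0` otherwise, so integrating `t ↦ μ(tX ∩ bZ)` over `gY` gives `μ(X ∩ Z) μ(gY ∩ bZX)`,
and integrating `u ↦ μ(uX ∩ gY)` over `bZ` gives `μ(Y ∩ X) μ(gYX ∩ bZ)`. The two integrals
agree: `gY` and `bZ` are covered by finitely many left cosets `c` of the open subgroup `X`,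
and both integrals equal `∑_c μ(gY ∩ c) μ(bZ ∩ c)`. -/

open scoped ENNReal

section Cosets

variable {G : Type*} [Group G]

theorem smul_coe_set_eq_of_mem_smul {X : Subgroup G} {a t : G} (ht : t ∈ a • (X : Set G)) :
    t • (X : Set G) = a • (X : Set G) := by
  rw [Set.mem_smul_set] at ht
  obtain ⟨u, hu, rfl⟩ := ht
  rw [smul_eq_mul, mul_smul, smul_coe_set hu]

theorem pairwiseDisjoint_image_smul_coe (X : Subgroup G) (s : Finset G) :
    (↑(s.image (· • (X : Set G))) : Set (Set G)).PairwiseDisjoint id := by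
  intro c hc c' hc' hne
  simp only [Finset.coe_image, Set.mem_image] at hc hc'
  obtain ⟨a, -, rfl⟩ := hc
  obtain ⟨a', -, rfl⟩ := hc'
  refine Set.disjoint_left.2 fun z hz hz' => hne ?_
  rw [← smul_coe_set_eq_of_mem_smul hz, smul_coe_set_eq_of_mem_smul hz']

theorem IsCompact.exists_finset_subset_iUnion_smul [TopologicalSpace G] [ContinuousConstSMul G G]
    {K : Set G} (hK : IsCompact K) {X : Subgroup G} (hX : IsOpen (X : Set G)) :
    ∃ s : Finset G, K ⊆ ⋃ a ∈ s, a • (X : Set G) :=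
  hK.elim_finite_subcover (fun a : G => a • (X : Set G)) (fun a => hX.smul a) fun z _ =>
    Set.mem_iUnion.2 ⟨z, Set.mem_smul_set.2 ⟨1, one_mem X, mul_one z⟩⟩

theorem singleton_mul_eq_smul (a : G) (s : Set G) : {a} * s = a • s :=
  Set.singleton_smul

theorem image_conj_eq_smul_mul_singleton (h : G) (s : Set G) :
    (fun y => h * y * h⁻¹) '' s = h • (s * {h⁻¹}) := by
  rw [Set.mul_singleton, ← Set.image_smul, Set.image_image]
  simp only [smul_eq_mul, mul_assoc]

namespace Subgroup

theorem coe_conj_smul (h : G) (X : Subgroup G) :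
    ((MulAut.conj h • X : Subgroup G) : Set G) = (fun y => h * y * h⁻¹) '' (X : Set G) := by
  rw [coe_pointwise_smul, ← Set.image_smul]
  rfl

theorem coe_mul_singleton_inv_eq_inv_smul (h : G) (X : Subgroup G) :
    (X : Set G) * {h⁻¹} = h⁻¹ • ((MulAut.conj h • X : Subgroup G) : Set G) := by
  rw [coe_conj_smul, image_conj_eq_smul_mul_singleton, inv_smul_smul]

theorem smul_inv_singleton_mul_coe (x h : G) (X : Subgroup G) :
    x • ({h} * (X : Set G))⁻¹ = (x * h⁻¹) • ((MulAut.conj h • X : Subgroup G) : Set G) := by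
  rw [mul_inv_rev, Set.inv_singleton, inv_coe_set, coe_mul_singleton_inv_eq_inv_smul,
    smul_smul]

theorem smul_inv_coe_mul_singleton_mul_coe (x h : G) (X : Subgroup G) :
    x • ((X : Set G) * {h} * X)⁻¹ =
      (x * h⁻¹) • (((MulAut.conj h • X : Subgroup G) : Set G) * X) := by
  rw [mul_inv_rev, mul_inv_rev, Set.inv_singleton, inv_coe_set, ← mul_assoc,
    coe_mul_singleton_inv_eq_inv_smul, smul_mul_assoc, smul_smul]

end Subgroup

end Cosets

theorem mconv_indicator_one_apply {G : Type} [Group G] [MeasurableSpace G] [MeasurableInv G]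
    [MeasurableMul G] {μ : Measure G} {S B : Set G} (hS : MeasurableSet S)
    (hB : MeasurableSet B) (x : G) :
    mconv μ (S.indicator fun _ => (1 : ℝ)) (B.indicator fun _ => (1 : ℝ)) x =
      μ.real (S ∩ x • B⁻¹) := by
  have hpre : (fun t => t⁻¹ * x) ⁻¹' B = x • B⁻¹ := Set.ext fun t => by
    rw [Set.mem_preimage, Set.mem_smul_set_iff_inv_smul_mem, Set.mem_inv, smul_eq_mul,
      mul_inv_rev, inv_inv]
  have hprod : (fun t => S.indicator (fun _ => (1 : ℝ)) t * B.indicator (fun _ => 1) (t⁻¹ * x))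
      = (S ∩ x • B⁻¹).indicator 1 := by
    rw [Set.inter_indicator_one, ← hpre]
    rfl
  rw [mconv, hprod, integral_indicator_one (hS.inter (hB.inv.const_smul x))]

namespace MeasureTheory

variable {G : Type*} [Group G] [MeasurableSpace G] {μ : Measure G}

theorem setLIntegral_comp_smul_coe_eq_sum [MeasurableConstSMul G G] {X : Subgroup G}
    (hX : MeasurableSet (X : Set G)) {S : Set G} (hS : MeasurableSet S) {s : Finset G}
    (hSs : S ⊆ ⋃ a ∈ s, a • (X : Set G)) (f : Set G → ℝ≥0∞) :
    ∫⁻ t in S, f (t • (X : Set G)) ∂μ =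
      ∑ c ∈ s.image (· • (X : Set G)), f c * μ (S ∩ c) := by
  have hcover : S = ⋃ c ∈ s.image (· • (X : Set G)), S ∩ c := by
    rw [← Set.inter_iUnion₂, Finset.set_biUnion_finset_image, Set.inter_eq_left.2 hSs]
  have hmeas : ∀ c ∈ s.image (· • (X : Set G)), MeasurableSet (S ∩ c) := by
    simp only [Finset.mem_image]
    rintro _ ⟨a, -, rfl⟩
    exact hS.inter (hX.const_smul a)
  conv_lhs => rw [hcover]
  rw [lintegral_biUnion_finset (t := fun c => S ∩ c)
    ((pairwiseDisjoint_image_smul_coe X s).mono fun _ => Set.inter_subset_right) hmeas]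
  refine Finset.sum_congr rfl fun c hc => ?_
  obtain ⟨a, -, rfl⟩ := Finset.mem_image.1 hc
  rw [setLIntegral_congr_fun (hmeas _ hc) fun t ht => by rw [smul_coe_set_eq_of_mem_smul ht.2],
    setLIntegral_const]

theorem setLIntegral_measure_smul_inter_comm [TopologicalSpace G] [IsTopologicalGroup G]
    [BorelSpace G] {X : Subgroup G} (hX : IsOpen (X : Set G))
    {A D : Set G} (hAc : IsCompact A) (hAm : MeasurableSet A)
    (hDc : IsCompact D) (hDm : MeasurableSet D) :
    ∫⁻ t in A, μ (t • (X : Set G) ∩ D) ∂μ = ∫⁻ u in D, μ (u • (X : Set G) ∩ A) ∂μ := by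
  obtain ⟨s, hs⟩ := (hAc.union hDc).exists_finset_subset_iUnion_smul hX
  rw [setLIntegral_comp_smul_coe_eq_sum hX.measurableSet hAm (Set.subset_union_left.trans hs)
      fun c => μ (c ∩ D),
    setLIntegral_comp_smul_coe_eq_sum hX.measurableSet hDm (Set.subset_union_right.trans hs)
      fun c => μ (c ∩ A)]
  refine Finset.sum_congr rfl fun c _ => ?_
  rw [Set.inter_comm A, Set.inter_comm D, mul_comm]

variable [μ.IsMulLeftInvariant]

theorem measure_smul_coe_inter_smul_coe (U W : Subgroup G) (b t : G) :
    μ (t • (U : Set G) ∩ b • (W : Set G)) =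
      (b • ((W : Set G) * (U : Set G))).indicator (fun _ => μ ((U : Set G) ∩ (W : Set G))) t := by
  by_cases ht : t ∈ b • ((W : Set G) * (U : Set G))
  · rw [Set.indicator_of_mem ht]
    obtain ⟨_, ⟨w, hw, u, hu, rfl⟩, rfl⟩ := ht
    have htU : (b • (w * u) : G) • (U : Set G) = (b * w) • (U : Set G) := by
      rw [smul_eq_mul, ← mul_assoc, mul_smul, smul_coe_set hu]
    have hbW : b • (W : Set G) = (b * w) • (W : Set G) := by rw [mul_smul, smul_coe_set hw]
    rw [htU, hbW, ← Set.smul_set_inter, measure_smul]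
  · rw [Set.indicator_of_notMem ht, Set.disjoint_iff_inter_eq_empty.1, measure_empty]
    refine Set.disjoint_left.2 fun z hzt hzb => ht ?_
    obtain ⟨u, hu, rfl⟩ := Set.mem_smul_set.1 hzt
    obtain ⟨w, hw, hwz⟩ := Set.mem_smul_set.1 hzb
    refine Set.mem_smul_set.2 ⟨w * u⁻¹, Set.mul_mem_mul hw (inv_mem hu), ?_⟩
    simp only [smul_eq_mul] at hwz ⊢
    rw [← mul_assoc, hwz, mul_inv_cancel_right]

theorem setLIntegral_measure_smul_coe_inter_smul_coe (U W : Subgroup G) (b : G) {A : Set G}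
    (hm : MeasurableSet (b • ((W : Set G) * (U : Set G)))) :
    ∫⁻ t in A, μ (t • (U : Set G) ∩ b • (W : Set G)) ∂μ =
      μ ((U : Set G) ∩ (W : Set G)) * μ (b • ((W : Set G) * (U : Set G)) ∩ A) := by
  simp_rw [measure_smul_coe_inter_smul_coe U W b]
  rw [setLIntegral_indicator hm, setLIntegral_const]

variable [TopologicalSpace G] [IsTopologicalGroup G] [BorelSpace G] {X Y Z : Subgroup G}

theorem measure_inter_mul_measure_smul_inter_smul_mul (hXo : IsOpen (X : Set G))
    (hYo : IsOpen (Y : Set G)) (hYc : IsCompact (Y : Set G))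
    (hZo : IsOpen (Z : Set G)) (hZc : IsCompact (Z : Set G)) (a b : G) :
    μ ((X : Set G) ∩ Z) * μ (a • (Y : Set G) ∩ b • ((Z : Set G) * X)) =
      μ ((Y : Set G) ∩ X) * μ (a • ((Y : Set G) * X) ∩ b • (Z : Set G)) :=
  calc μ ((X : Set G) ∩ Z) * μ (a • (Y : Set G) ∩ b • ((Z : Set G) * X))
      = ∫⁻ t in a • (Y : Set G), μ (t • (X : Set G) ∩ b • (Z : Set G)) ∂μ := by
        rw [setLIntegral_measure_smul_coe_inter_smul_coe X Z b
          (hXo.mul_left.smul b).measurableSet, Set.inter_comm _ (a • (Y : Set G))]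
    _ = ∫⁻ u in b • (Z : Set G), μ (u • (X : Set G) ∩ a • (Y : Set G)) ∂μ :=
        setLIntegral_measure_smul_inter_comm hXo (hYc.smul a) (hYo.smul a).measurableSet
          (hZc.smul b) (hZo.smul b).measurableSet
    _ = μ ((Y : Set G) ∩ X) * μ (a • ((Y : Set G) * X) ∩ b • (Z : Set G)) := by
        rw [setLIntegral_measure_smul_coe_inter_smul_coe X Y a
          (hXo.mul_left.smul a).measurableSet, Set.inter_comm (X : Set G)]

theorem measureReal_smul_inter_smul_mul [μ.IsOpenPosMeasure] [IsFiniteMeasureOnCompacts μ]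
    (hXo : IsOpen (X : Set G)) (hXc : IsCompact (X : Set G))
    (hYo : IsOpen (Y : Set G)) (hYc : IsCompact (Y : Set G))
    (hZo : IsOpen (Z : Set G)) (hZc : IsCompact (Z : Set G)) (a b : G) :
    μ.real (a • (Y : Set G) ∩ b • ((Z : Set G) * X)) =
      μ.real ((Y : Set G) ∩ X) / μ.real ((X : Set G) ∩ Z) *
        μ.real (a • ((Y : Set G) * X) ∩ b • (Z : Set G)) := by
  simp only [measureReal_def]
  rw [← ENNReal.toReal_div, ← ENNReal.toReal_mul, ← ENNReal.mul_div_right_comm]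
  congr 1
  rw [ENNReal.eq_div_iff ((hXo.inter hZo).measure_ne_zero μ ⟨1, one_mem X, one_mem Z⟩)
      (ne_top_of_le_ne_top hXc.measure_ne_top (measure_mono Set.inter_subset_left)),
    measure_inter_mul_measure_smul_inter_smul_mul hXo hYo hYc hZo hZc]

end MeasureTheory

theorem indicator_conv_doubleCoset_indicator_general {G : Type} [Group G] [TopologicalSpace G]
    [IsTopologicalGroup G]
    [MeasurableSpace G] [BorelSpace G]
    (μ : Measure G) [μ.IsHaarMeasure]
    (X Y : Subgroup G) (hXo : IsOpen (X : Set G)) (hXc : IsCompact (X : Set G))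
    (hYo : IsOpen (Y : Set G)) (hYc : IsCompact (Y : Set G)) (g h : G) :
    mconv μ (({g} * (Y : Set G)).indicator fun _ => (1 : ℝ))
        (((X : Set G) * {h} * (X : Set G)).indicator fun _ => (1 : ℝ)) =
      fun x => ((μ ((Y : Set G) ∩ (X : Set G))).toReal /
          (μ ((X : Set G) ∩ ((fun y => h * y * h⁻¹) '' (X : Set G)))).toReal) *
        mconv μ (({g} * (Y : Set G) * (X : Set G)).indicator fun _ => (1 : ℝ))
          (({h} * (X : Set G)).indicator fun _ => (1 : ℝ)) x := by
  have hZ : ((MulAut.conj h • X : Subgroup G) : Set G) = h • ((X : Set G) * {h⁻¹}) := by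
    rw [Subgroup.coe_conj_smul, image_conj_eq_smul_mul_singleton]
  have hZo : IsOpen ((MulAut.conj h • X : Subgroup G) : Set G) := hZ ▸ hXo.mul_right.smul h
  have hZc : IsCompact ((MulAut.conj h • X : Subgroup G) : Set G) :=
    hZ ▸ (hXc.mul isCompact_singleton).smul h
  funext x
  rw [mconv_indicator_one_apply hYo.mul_left.measurableSet hXo.mul_left.measurableSet,
    mconv_indicator_one_apply hXo.mul_left.measurableSet hXo.mul_left.measurableSet,
    Subgroup.smul_inv_coe_mul_singleton_mul_coe, Subgroup.smul_inv_singleton_mul_coe,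
    singleton_mul_eq_smul, smul_mul_assoc, ← Subgroup.coe_conj_smul]
  exact measureReal_smul_inter_smul_mul hXo hXc hYo hYc hZo hZc g (x * h⁻¹)

/-- For compact open subgroups `X, Y ⊆ G` and `g, h ∈ G`:
`1_{gY} ⋆ 1_{XhX} = (μ(Y ∩ X)/μ(X ∩ hXh⁻¹)) · (1_{gYX} ⋆ 1_{hX})`. -/
theorem indicator_conv_doubleCoset_indicator {G : Type} [Group G] [TopologicalSpace G]
    [IsTopologicalGroup G] [LocallyCompactSpace G] [T2Space G]
    [MeasurableSpace G] [BorelSpace G]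
    (μ : Measure G) [μ.IsHaarMeasure]
    (H : Subgroup G) (hHo : IsOpen (H : Set G)) (hHc : IsCompact (H : Set G))
    (hμH : μ (H : Set G) = 1)
    (X Y : Subgroup G) (hXo : IsOpen (X : Set G)) (hXc : IsCompact (X : Set G))
    (hYo : IsOpen (Y : Set G)) (hYc : IsCompact (Y : Set G)) (g h : G) :
    mconv μ (({g} * (Y : Set G)).indicator fun _ => (1 : ℝ))
        (((X : Set G) * {h} * (X : Set G)).indicator fun _ => (1 : ℝ)) =
      fun x => ((μ ((Y : Set G) ∩ (X : Set G))).toReal /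
          (μ ((X : Set G) ∩ ((fun y => h * y * h⁻¹) '' (X : Set G)))).toReal) *
        mconv μ (({g} * (Y : Set G) * (X : Set G)).indicator fun _ => (1 : ℝ))
          (({h} * (X : Set G)).indicator fun _ => (1 : ℝ)) x :=
  indicator_conv_doubleCoset_indicator_general μ X Y hXo hXc hYo hYc g h
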